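/- arXiv:2406.13772 — 2 statements merged into one kernel-verified Lean document; each statement's English description precedes it below -/
import Mathlib

section
/- Let d > 1 and 1 < p < d. Let w be a doubling weight on ℝⁿ satisfying the lower Ahlfors condition w(B(x,r)) ≥ c r^d for all x ∈ ℝⁿ and r > 0, with c > 0. Then there is a constant C depending on w, p, d such that for every nonnegative f ∈ L^p(w) with ‖f‖_{L^p(w)} > 0 and every x ∈ ℝⁿ, T_w f(x) ≤ C ‖f‖_{L^p(w)}^{p/d} · (M^c_w f(x))^{1−p/d}. -/
/-!
Hedberg's argument. Cover `ℝⁿ \ {x}` by the dyadic annuli `R 2ᵏ ≤ |x - y| < R 2ᵏ⁺¹`, `k ∈ ℤ`;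
on such an annulus the kernel is at most `2 R 2ᵏ / w(B(x, R 2ᵏ))`. For `k < 0` doubling bounds
the contribution of the annulus by `2 D R 2ᵏ M^c_w f(x)`, and for `k ≥ 0` Hölder's inequality
and the lower Ahlfors bound bound it by `C ‖f‖ (R 2ᵏ)^(1 - d/p)`, which sums since `p < d`.
Hence `T_w f(x) ≲ R M^c_w f(x) + ‖f‖ R^(1 - d/p)` for every `R > 0`, and
`R = (‖f‖ / M^c_w f(x))^(p/d)` balances the two terms.
-/

open MeasureTheory Metric ENNReal

noncomputable section

/-- `w(B(x,r)) = ∫_{B(x,r)} w`. -/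
def weightMass {n : ℕ} (w : EuclideanSpace ℝ (Fin n) → ℝ)
    (x : EuclideanSpace ℝ (Fin n)) (r : ℝ) : ℝ :=
  ∫ y in ball x r, w y

/-- `w` is a doubling weight with doubling constant `D`. -/
def IsDoubling {n : ℕ} (w : EuclideanSpace ℝ (Fin n) → ℝ) (D : ℝ) : Prop :=
  (∀ x, 0 ≤ w x) ∧ LocallyIntegrable w volume ∧
    ∀ (x : EuclideanSpace ℝ (Fin n)) (r : ℝ), 0 < r →
      (∫ y in ball x (2 * r), w y) ≤ D * ∫ y in ball x r, w y

/-- The potential operator `T_w f(x) = ∫ (|x−y|/w(B(x,|x−y|))) f(y) w(y) dy`,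
as an `ℝ≥0∞`-valued integral. -/
def Tw {n : ℕ} (w f : EuclideanSpace ℝ (Fin n) → ℝ) (x : EuclideanSpace ℝ (Fin n)) : ℝ≥0∞ :=
  ∫⁻ y, ENNReal.ofReal ((dist x y / weightMass w x (dist x y)) * f y * w y)

/-- The centered weighted maximal function
`M^c_w f(x) = sup_{r>0} (1/w(B(x,r))) ∫_{B(x,r)} |f| w`. -/
def Mcw {n : ℕ} (w f : EuclideanSpace ℝ (Fin n) → ℝ) (x : EuclideanSpace ℝ (Fin n)) : ℝ≥0∞ :=
  ⨆ (r : ℝ) (_ : 0 < r),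
    (∫⁻ y in ball x r, ENNReal.ofReal (|f y| * w y)) / ENNReal.ofReal (weightMass w x r)

lemma lintegral_mul_le_weighted_Lp_mul {α : Type*} [MeasurableSpace α] {μ : Measure α}
    {p : ℝ} (hp : 1 ≤ p) {F V : α → ℝ≥0∞} (hF : AEMeasurable F μ) (hV : AEMeasurable V μ) :
    ∫⁻ a, F a * V a ∂μ ≤
      (∫⁻ a, F a ^ p * V a ∂μ) ^ (1 / p) * (∫⁻ a, V a ∂μ) ^ (1 - 1 / p) := by
  have hp0 : p ≠ 0 := by positivity
  have hp1 : 0 ≤ 1 - 1 / p := sub_nonneg.2 ((div_le_one (by positivity)).2 hp)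
  calc ∫⁻ a, F a * V a ∂μ = ∫⁻ a, (F a ^ p * V a) ^ (1 / p) * V a ^ (1 - 1 / p) ∂μ := by
        refine lintegral_congr fun a => ?_
        rw [mul_rpow_of_nonneg _ _ (by positivity), one_div, rpow_rpow_inv hp0, mul_assoc,
          ← rpow_add_of_nonneg _ _ (by positivity) (by rwa [one_div] at hp1), ← one_div,
          add_sub_cancel, rpow_one]
    _ ≤ _ := lintegral_mul_norm_pow_le ((hF.pow_const p).mul hV) hV (by positivity) hp1
          (add_sub_cancel _ _)

lemma le_ofReal_mul_rpow_of_forall_le {T M : ℝ≥0∞} {a b N θ : ℝ} (ha : 0 < a) (hb : 0 ≤ b)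
    (hN : 0 < N) (hθ0 : 0 < θ) (hθ1 : θ < 1)
    (h : ∀ R : ℝ, 0 < R →
      T ≤ M * ENNReal.ofReal (a * R) + ENNReal.ofReal N * ENNReal.ofReal (b * R ^ (1 - θ⁻¹))) :
    T ≤ ENNReal.ofReal ((a + b) * N ^ θ) * M ^ (1 - θ) := by
  rcases eq_or_ne M 0 with rfl | hM0
  · -- with `M = 0` only the second term is left, and it tends to `0` as `R → ∞`
    have hexp : 0 < θ⁻¹ - 1 := sub_pos.2 ((one_lt_inv₀ hθ0).2 hθ1)
    have hlim := ENNReal.Tendsto.const_mul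
      (ENNReal.tendsto_ofReal ((tendsto_rpow_neg_atTop hexp).const_mul b))
      (a := ENNReal.ofReal N) (Or.inr ofReal_ne_top)
    rw [mul_zero, ofReal_zero, mul_zero] at hlim
    have hT : T ≤ 0 := ge_of_tendsto hlim <|
      (Filter.eventually_gt_atTop (0 : ℝ)).mono fun R hR => by simpa [neg_sub] using h R hR
    simp [nonpos_iff_eq_zero.1 hT]
  rcases eq_or_ne M ⊤ with rfl | hMtop
  · rw [top_rpow_of_pos (sub_pos.2 hθ1), mul_top (by positivity)]
    exact le_top
  obtain ⟨m, hm, rfl⟩ : ∃ m, 0 < m ∧ M = ENNReal.ofReal m :=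
    ⟨M.toReal, toReal_pos hM0 hMtop, (ofReal_toReal hMtop).symm⟩
  have hbal₁ : m * (a * (N / m) ^ θ) = a * (N ^ θ * m ^ (1 - θ)) := by
    rw [Real.div_rpow hN.le hm.le, Real.rpow_sub hm, Real.rpow_one]
    field_simp
  have hbal₂ : N * (b * ((N / m) ^ θ) ^ (1 - θ⁻¹)) = b * (N ^ θ * m ^ (1 - θ)) := by
    rw [← Real.rpow_mul (by positivity), mul_sub, mul_one, mul_inv_cancel₀ hθ0.ne',
      Real.div_rpow hN.le hm.le, Real.rpow_sub_one hN.ne', Real.rpow_sub_one hm.ne',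
      Real.rpow_sub hm, Real.rpow_one]
    field_simp
  calc T ≤ ENNReal.ofReal m * ENNReal.ofReal (a * (N / m) ^ θ) +
        ENNReal.ofReal N * ENNReal.ofReal (b * ((N / m) ^ θ) ^ (1 - θ⁻¹)) := h _ (by positivity)
    _ = ENNReal.ofReal ((a + b) * N ^ θ) * ENNReal.ofReal m ^ (1 - θ) := by
        rw [ofReal_rpow_of_nonneg hm.le (sub_pos.2 hθ1).le, ← ofReal_mul hm.le,
          ← ofReal_mul hN.le, hbal₁, hbal₂, ← ofReal_add (by positivity) (by positivity),
          ← ofReal_mul (by positivity)]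
        congr 1
        ring

lemma Metric.compl_singleton_subset_iUnion_annuli {X : Type*} [MetricSpace X] (x : X)
    {R : ℝ} (hR : 0 < R) :
    {x}ᶜ ⊆ ⋃ k : ℤ, ball x (2 * (R * 2 ^ k)) \ ball x (R * 2 ^ k) := by
  intro y hy
  obtain ⟨k, hk₁, hk₂⟩ := exists_mem_Ico_zpow (div_pos (dist_pos.2 hy) hR) one_lt_two
  rw [le_div_iff₀ hR] at hk₁
  rw [div_lt_iff₀ hR, zpow_add_one₀ two_ne_zero] at hk₂
  exact Set.mem_iUnion.2 ⟨k, mem_ball.2 (by linarith), fun h => (mem_ball.1 h).not_ge (by linarith)⟩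

lemma MeasureTheory.LocallyIntegrable.integrableOn_ball {X E : Type*} [PseudoMetricSpace X]
    [ProperSpace X] [MeasurableSpace X] [NormedAddCommGroup E] {μ : Measure X} {g : X → E}
    (hg : LocallyIntegrable g μ) (x : X) (r : ℝ) : IntegrableOn g (ball x r) μ :=
  (hg.integrableOn_isCompact (isCompact_closedBall x r)).mono_set ball_subset_closedBall

lemma two_rpow_one_sub_div_lt_one {d p : ℝ} (hp : 0 < p) (hpd : p < d) :
    (2 : ℝ) ^ (1 - d / p) < 1 :=
  Real.rpow_lt_one_of_one_lt_of_neg one_lt_two (by rw [sub_neg, one_lt_div hp]; exact hpd)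

def hedbergConst (D c d p : ℝ) : ℝ :=
  2 * D ^ (1 - 1 / p) * c ^ (-(1 / p)) / (1 - 2 ^ (1 - d / p))

lemma hedbergConst_pos {D c d p : ℝ} (hD : 0 < D) (hc : 0 < c) (hp : 0 < p) (hpd : p < d) :
    0 < hedbergConst D c d p := by
  have := sub_pos.2 (two_rpow_one_sub_div_lt_one hp hpd)
  unfold hedbergConst
  positivity

section Weight

variable {n : ℕ} {w f : EuclideanSpace ℝ (Fin n) → ℝ} {x : EuclideanSpace ℝ (Fin n)}

lemma weightMass_mono (hw0 : ∀ y, 0 ≤ w y) (hloc : LocallyIntegrable w volume)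
    {r r' : ℝ} (h : r ≤ r') : weightMass w x r ≤ weightMass w x r' :=
  setIntegral_mono_set (hloc.integrableOn_ball x r') (Filter.Eventually.of_forall hw0)
    (ball_subset_ball h).eventuallyLE

lemma ofReal_weightMass (hw0 : ∀ y, 0 ≤ w y) (hloc : LocallyIntegrable w volume) (r : ℝ) :
    ENNReal.ofReal (weightMass w x r) = ∫⁻ y in ball x r, ENNReal.ofReal (w y) :=
  ofReal_integral_eq_lintegral_ofReal (hloc.integrableOn_ball x r)
    (Filter.Eventually.of_forall hw0)

lemma IsDoubling.one_le {D r : ℝ} (hw : IsDoubling w D) (hr : 0 < r)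
    (hpos : 0 < weightMass w x r) : 1 ≤ D :=
  le_of_mul_le_mul_right (by
    rw [one_mul]
    exact (weightMass_mono hw.1 hw.2.1 (by linarith)).trans (hw.2.2 x r hr)) hpos

lemma dist_div_weightMass_le (hw0 : ∀ y, 0 ≤ w y) (hloc : LocallyIntegrable w volume) {s : ℝ}
    (hs : 0 < weightMass w x s) {y : EuclideanSpace ℝ (Fin n)}
    (hy : y ∈ ball x (2 * s) \ ball x s) :
    dist x y / weightMass w x (dist x y) ≤ 2 * s / weightMass w x s := by
  rw [Set.mem_sdiff, mem_ball, mem_ball, not_lt, dist_comm] at hy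
  exact div_le_div₀ (by linarith [dist_nonneg (x := x) (y := y)]) hy.1.le hs
    (weightMass_mono hw0 hloc hy.2)

lemma lintegral_ball_le_Mcw_mul {r : ℝ} (hr : 0 < r) (hW : 0 < weightMass w x r) :
    ∫⁻ y in ball x r, ENNReal.ofReal (|f y| * w y) ≤
      Mcw w f x * ENNReal.ofReal (weightMass w x r) := by
  have h : (∫⁻ y in ball x r, ENNReal.ofReal (|f y| * w y)) /
      ENNReal.ofReal (weightMass w x r) ≤ Mcw w f x :=
    le_iSup₂ (f := fun r (_ : 0 < r) => (∫⁻ y in ball x r, ENNReal.ofReal (|f y| * w y)) /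
      ENNReal.ofReal (weightMass w x r)) r hr
  rwa [ENNReal.div_le_iff (ofReal_pos.2 hW).ne' ofReal_ne_top] at h

lemma lintegral_ball_le_Lp_mul {p : ℝ} (hp : 1 ≤ p) (hw0 : ∀ y, 0 ≤ w y)
    (hloc : LocallyIntegrable w volume) (hf : Measurable f) (r : ℝ) :
    ∫⁻ y in ball x r, ENNReal.ofReal (|f y| * w y) ≤
      (∫⁻ y, ENNReal.ofReal (|f y| ^ p * w y)) ^ (1 / p) *
        ENNReal.ofReal (weightMass w x r) ^ (1 - 1 / p) := by
  have hw : AEMeasurable (fun y => ENNReal.ofReal (w y)) (volume.restrict (ball x r)) :=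
    hloc.aestronglyMeasurable.aemeasurable.ennreal_ofReal.restrict
  calc ∫⁻ y in ball x r, ENNReal.ofReal (|f y| * w y)
      = ∫⁻ y in ball x r, ENNReal.ofReal |f y| * ENNReal.ofReal (w y) := by
        simp_rw [ofReal_mul (abs_nonneg _)]
    _ ≤ (∫⁻ y in ball x r, ENNReal.ofReal |f y| ^ p * ENNReal.ofReal (w y)) ^ (1 / p) *
        (∫⁻ y in ball x r, ENNReal.ofReal (w y)) ^ (1 - 1 / p) :=
      lintegral_mul_le_weighted_Lp_mul hp hf.abs.ennreal_ofReal.aemeasurable hw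
    _ ≤ _ := by
      simp_rw [← ofReal_weightMass hw0 hloc, ofReal_rpow_of_nonneg (abs_nonneg _) (by positivity),
        ← ofReal_mul (Real.rpow_nonneg (abs_nonneg _) _)]
      gcongr
      exact Measure.restrict_le_self

def TwIntegrand (w f : EuclideanSpace ℝ (Fin n) → ℝ) (x y : EuclideanSpace ℝ (Fin n)) : ℝ≥0∞ :=
  ENNReal.ofReal ((dist x y / weightMass w x (dist x y)) * f y * w y)

lemma Tw_le_tsum_annuli {R : ℝ} (hR : 0 < R) :
    Tw w f x ≤ ∑' k : ℤ,
      ∫⁻ y in ball x (2 * (R * 2 ^ k)) \ ball x (R * 2 ^ k), TwIntegrand w f x y := by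
  have hsupp : Function.support (TwIntegrand w f x) ⊆ {x}ᶜ := by
    intro y hy hyx
    simp [TwIntegrand, Set.mem_singleton_iff.1 hyx] at hy
  calc Tw w f x = ∫⁻ y in {x}ᶜ, TwIntegrand w f x y :=
        (setLIntegral_eq_of_support_subset hsupp).symm
    _ ≤ ∫⁻ y in ⋃ k : ℤ, ball x (2 * (R * 2 ^ k)) \ ball x (R * 2 ^ k), TwIntegrand w f x y :=
        lintegral_mono_set (Metric.compl_singleton_subset_iUnion_annuli x hR)
    _ ≤ _ := lintegral_iUnion_le _ _

lemma lintegral_annulus_TwIntegrand_le (hw0 : ∀ y, 0 ≤ w y) (hloc : LocallyIntegrable w volume)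
    {s : ℝ} (hs : 0 < weightMass w x s) :
    ∫⁻ y in ball x (2 * s) \ ball x s, TwIntegrand w f x y ≤
      ENNReal.ofReal (2 * s / weightMass w x s) *
        ∫⁻ y in ball x (2 * s), ENNReal.ofReal (|f y| * w y) := by
  calc ∫⁻ y in ball x (2 * s) \ ball x s, TwIntegrand w f x y
      ≤ ∫⁻ y in ball x (2 * s) \ ball x s,
          ENNReal.ofReal (2 * s / weightMass w x s) * ENNReal.ofReal (|f y| * w y) := by
        refine setLIntegral_mono' (measurableSet_ball.diff measurableSet_ball) fun y hy => ?_
        have hK := dist_div_weightMass_le hw0 hloc hs hy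
        have hK0 : 0 ≤ dist x y / weightMass w x (dist x y) :=
          div_nonneg dist_nonneg (hs.le.trans (weightMass_mono hw0 hloc
            (by simpa [dist_comm] using hy.2)))
        rw [TwIntegrand, ← ofReal_mul (hK0.trans hK), ← mul_assoc]
        refine ofReal_le_ofReal (mul_le_mul_of_nonneg_right ?_ (hw0 y))
        exact (mul_le_mul_of_nonneg_left (le_abs_self _) hK0).trans
          (mul_le_mul_of_nonneg_right hK (abs_nonneg _))
    _ = ENNReal.ofReal (2 * s / weightMass w x s) *
          ∫⁻ y in ball x (2 * s) \ ball x s, ENNReal.ofReal (|f y| * w y) :=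
        lintegral_const_mul' _ _ ofReal_ne_top
    _ ≤ _ := by gcongr; exact Set.sdiff_subset

lemma lintegral_annulus_TwIntegrand_le_Mcw {D s : ℝ} (hw : IsDoubling w D) (hs : 0 < s)
    (hWs : 0 < weightMass w x s) :
    ∫⁻ y in ball x (2 * s) \ ball x s, TwIntegrand w f x y ≤
      Mcw w f x * ENNReal.ofReal (2 * D * s) := by
  have hD : 0 < D := one_pos.trans_le (hw.one_le hs hWs)
  obtain ⟨hw0, hloc, hdbl⟩ := hw
  have hW2s : 0 < weightMass w x (2 * s) := hWs.trans_le (weightMass_mono hw0 hloc (by linarith))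
  calc ∫⁻ y in ball x (2 * s) \ ball x s, TwIntegrand w f x y
      ≤ ENNReal.ofReal (2 * s / weightMass w x s) *
          ∫⁻ y in ball x (2 * s), ENNReal.ofReal (|f y| * w y) :=
        lintegral_annulus_TwIntegrand_le hw0 hloc hWs
    _ ≤ ENNReal.ofReal (2 * s / weightMass w x s) *
          (Mcw w f x * ENNReal.ofReal (D * weightMass w x s)) := by
        gcongr
        exact (lintegral_ball_le_Mcw_mul (by positivity) hW2s).trans
          (by gcongr; exact hdbl x s hs)
    _ = Mcw w f x * ENNReal.ofReal (2 * s / weightMass w x s * (D * weightMass w x s)) := by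
        rw [mul_left_comm, ← ofReal_mul (div_nonneg (by positivity) hWs.le)]
    _ = Mcw w f x * ENNReal.ofReal (2 * D * s) := by
        congr 2
        field_simp

lemma mul_rpow_neg_one_div_le_of_le {c s d p W : ℝ} (hc : 0 < c) (hs : 0 < s) (hp : 0 < p)
    (hW : c * s ^ d ≤ W) : s * W ^ (-(1 / p)) ≤ c ^ (-(1 / p)) * s ^ (1 - d / p) := by
  calc s * W ^ (-(1 / p)) ≤ s * (c * s ^ d) ^ (-(1 / p)) :=
        mul_le_mul_of_nonneg_left
          (Real.rpow_le_rpow_of_nonpos (by positivity) hW (by rw [neg_nonpos]; positivity)) hs.le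
    _ = c ^ (-(1 / p)) * s ^ (1 - d / p) := by
        rw [Real.mul_rpow hc.le (by positivity), ← Real.rpow_mul hs.le,
          show 1 - d / p = 1 + d * -(1 / p) by ring, Real.rpow_add hs, Real.rpow_one]
        ring

lemma lintegral_annulus_TwIntegrand_le_Lp {D c d p s : ℝ} (hw : IsDoubling w D) (hp : 1 ≤ p)
    (hc : 0 < c) (hs : 0 < s) (hAs : c * s ^ d ≤ weightMass w x s) (hf : Measurable f) :
    ∫⁻ y in ball x (2 * s) \ ball x s, TwIntegrand w f x y ≤
      (∫⁻ y, ENNReal.ofReal (|f y| ^ p * w y)) ^ (1 / p) *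
        ENNReal.ofReal (2 * D ^ (1 - 1 / p) * c ^ (-(1 / p)) * s ^ (1 - d / p)) := by
  set N := (∫⁻ y, ENNReal.ofReal (|f y| ^ p * w y)) ^ (1 / p)
  have hWs : 0 < weightMass w x s := lt_of_lt_of_le (by positivity) hAs
  have hD : 0 < D := one_pos.trans_le (hw.one_le hs hWs)
  have hp1 : 0 ≤ 1 - 1 / p := sub_nonneg.2 ((div_le_one (by positivity)).2 hp)
  obtain ⟨hw0, hloc, hdbl⟩ := hw
  calc ∫⁻ y in ball x (2 * s) \ ball x s, TwIntegrand w f x y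
      ≤ ENNReal.ofReal (2 * s / weightMass w x s) *
          ∫⁻ y in ball x (2 * s), ENNReal.ofReal (|f y| * w y) :=
        lintegral_annulus_TwIntegrand_le hw0 hloc hWs
    _ ≤ ENNReal.ofReal (2 * s / weightMass w x s) *
          (N * ENNReal.ofReal (D * weightMass w x s) ^ (1 - 1 / p)) := by
        gcongr
        exact (lintegral_ball_le_Lp_mul hp hw0 hloc hf _).trans (by gcongr; exact hdbl x s hs)
    _ = N * ENNReal.ofReal (2 * D ^ (1 - 1 / p) * (s * weightMass w x s ^ (-(1 / p)))) := by
        rw [ofReal_rpow_of_nonneg (by positivity) hp1, mul_left_comm,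
          ← ofReal_mul (div_nonneg (by positivity) hWs.le)]
        congr 2
        rw [Real.mul_rpow hD.le hWs.le, show 1 - 1 / p = 1 + -(1 / p) by ring,
          Real.rpow_add hWs, Real.rpow_one]
        field_simp
    _ ≤ _ := by
        rw [mul_assoc (2 * D ^ (1 - 1 / p))]
        gcongr N * ENNReal.ofReal ?_
        exact mul_le_mul_of_nonneg_left (mul_rpow_neg_one_div_le_of_le hc hs (by positivity) hAs)
          (by positivity)

theorem Tw_le_hedberg {D c d p R : ℝ} (hw : IsDoubling w D) (hp : 1 ≤ p) (hpd : p < d)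
    (hc : 0 < c) (hAhlfors : ∀ (x : EuclideanSpace ℝ (Fin n)) (r : ℝ), 0 < r →
      c * r ^ d ≤ ∫ y in ball x r, w y) (hf : Measurable f) (hR : 0 < R) :
    Tw w f x ≤ Mcw w f x * ENNReal.ofReal (2 * D * R) +
      (∫⁻ y, ENNReal.ofReal (|f y| ^ p * w y)) ^ (1 / p) * ENNReal.ofReal
        (hedbergConst D c d p * R ^ (1 - d / p)) := by
  set a : ℤ → ℝ≥0∞ := fun k =>
    ∫⁻ y in ball x (2 * (R * 2 ^ k)) \ ball x (R * 2 ^ k), TwIntegrand w f x y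
  set N := (∫⁻ y, ENNReal.ofReal (|f y| ^ p * w y)) ^ (1 / p)
  have hD : 0 < D := one_pos.trans_le (hw.one_le one_pos (lt_of_lt_of_le (by positivity)
    (hAhlfors x 1 one_pos)))
  have hq1 := two_rpow_one_sub_div_lt_one (by positivity) hpd
  have hnear : ∑' k : ℕ, a (-(k + 1)) ≤ Mcw w f x * ENNReal.ofReal (2 * D * R) := by
    calc ∑' k : ℕ, a (-(k + 1))
        ≤ ∑' k : ℕ, Mcw w f x * ENNReal.ofReal (2 * D * R / 2 / 2 ^ k) := by
          refine ENNReal.tsum_le_tsum fun k => ?_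
          have hs : R * (2 : ℝ) ^ (-((k : ℤ) + 1)) = R / 2 / 2 ^ k := by
            rw [zpow_neg, zpow_add_one₀ two_ne_zero, zpow_natCast]
            field_simp
          refine (lintegral_annulus_TwIntegrand_le_Mcw hw (by positivity)
            (lt_of_lt_of_le (by positivity) (hAhlfors x _ (by positivity)))).trans_eq ?_
          rw [hs]
          congr 2
          ring
      _ = _ := by
          rw [ENNReal.tsum_mul_left, ← ofReal_tsum_of_nonneg (fun k => by positivity)
            (summable_geometric_two' _), tsum_geometric_two']
  have hfar : ∑' k : ℕ, a k ≤ N * ENNReal.ofReal (hedbergConst D c d p * R ^ (1 - d / p)) := by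
    calc ∑' k : ℕ, a k ≤ ∑' k : ℕ, N * ENNReal.ofReal (2 * D ^ (1 - 1 / p) * c ^ (-(1 / p)) *
          R ^ (1 - d / p) * ((2 : ℝ) ^ (1 - d / p)) ^ k) := by
          refine ENNReal.tsum_le_tsum fun k => ?_
          refine (lintegral_annulus_TwIntegrand_le_Lp hw hp hc (by positivity)
            (hAhlfors x _ (by positivity)) hf).trans_eq ?_
          rw [zpow_natCast, Real.mul_rpow hR.le (by positivity), ← Real.rpow_pow_comm zero_le_two]
          congr 2
          ring
      _ = _ := by
          rw [ENNReal.tsum_mul_left, ← ofReal_tsum_of_nonneg (fun k => by positivity)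
            ((summable_geometric_of_lt_one (by positivity) hq1).mul_left _), tsum_mul_left,
            tsum_geometric_of_lt_one (by positivity) hq1, hedbergConst]
          congr 2
          ring
  calc Tw w f x ≤ ∑' k : ℤ, a k := Tw_le_tsum_annuli hR
    _ = ∑' k : ℕ, a k + ∑' k : ℕ, a (-(k + 1)) :=
        tsum_of_nat_of_neg_add_one ENNReal.summable ENNReal.summable
    _ ≤ _ := by
        rw [add_comm]
        exact add_le_add hnear hfar

end Weight

theorem stmt13_general (n : ℕ) (d p : ℝ) (hp : 1 < p) (hpd : p < d)
    (w : EuclideanSpace ℝ (Fin n) → ℝ) (D : ℝ) (hw : IsDoubling w D)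
    (c : ℝ) (hc : 0 < c)
    (hAhlfors : ∀ (x : EuclideanSpace ℝ (Fin n)) (r : ℝ), 0 < r →
      c * r ^ d ≤ ∫ y in ball x r, w y) :
    ∃ C : ℝ, 0 < C ∧
      ∀ f : EuclideanSpace ℝ (Fin n) → ℝ, (∀ x, 0 ≤ f x) → Measurable f →
        Integrable (fun x => f x ^ p * w x) →
        0 < (∫ x, f x ^ p * w x) ^ (1 / p) →
          ∀ x : EuclideanSpace ℝ (Fin n),
            Tw w f x ≤
              ENNReal.ofReal (C * ((∫ z, f z ^ p * w z) ^ (1 / p)) ^ (p / d)) *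
                Mcw w f x ^ (1 - p / d) := by
  have hp0 : 0 < p := one_pos.trans hp
  have hd0 : 0 < d := hp0.trans hpd
  have hD : 0 < D := one_pos.trans_le (hw.one_le one_pos (lt_of_lt_of_le (by positivity)
    (hAhlfors 0 1 one_pos)))
  have hB := hedbergConst_pos hD hc hp0 hpd
  refine ⟨2 * D + hedbergConst D c d p, by positivity, ?_⟩
  intro f hf0 hfm hint hN x
  have hnorm : (∫⁻ y, ENNReal.ofReal (|f y| ^ p * w y)) ^ (1 / p) =
      ENNReal.ofReal ((∫ z, f z ^ p * w z) ^ (1 / p)) := by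
    have hfpw : ∀ z, 0 ≤ f z ^ p * w z := fun z =>
      mul_nonneg (Real.rpow_nonneg (hf0 z) p) (hw.1 z)
    simp_rw [abs_of_nonneg (hf0 _)]
    rw [← ofReal_integral_eq_lintegral_ofReal hint (Filter.Eventually.of_forall hfpw),
      ofReal_rpow_of_nonneg (integral_nonneg hfpw) (by positivity)]
  refine le_ofReal_mul_rpow_of_forall_le (by positivity) hB.le hN (by positivity)
    ((div_lt_one hd0).2 hpd) fun R hR => ?_
  rw [inv_div, ← hnorm]
  exact Tw_le_hedberg hw hp.le hpd hc hAhlfors hfm hR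

/-- Let `d > 1`, `1 < p < d`, and let `w` be a doubling weight with
`w(B(x,r)) ≥ c rᵈ`. Then there is `C = C(w,p,d)` such that for every nonnegative
`f ∈ L^p(w)` with `‖f‖_{L^p(w)} > 0` and every `x`,
`T_w f(x) ≤ C ‖f‖_{L^p(w)}^{p/d} (M^c_w f(x))^{1−p/d}`. -/
theorem stmt13 (n : ℕ) (d p : ℝ) (hd : 1 < d) (hp : 1 < p) (hpd : p < d)
    (w : EuclideanSpace ℝ (Fin n) → ℝ) (D : ℝ) (hw : IsDoubling w D)
    (c : ℝ) (hc : 0 < c)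
    (hAhlfors : ∀ (x : EuclideanSpace ℝ (Fin n)) (r : ℝ), 0 < r →
      c * r ^ d ≤ ∫ y in ball x r, w y) :
    ∃ C : ℝ, 0 < C ∧
      ∀ f : EuclideanSpace ℝ (Fin n) → ℝ, (∀ x, 0 ≤ f x) → Measurable f →
        Integrable (fun x => f x ^ p * w x) →
        0 < (∫ x, f x ^ p * w x) ^ (1 / p) →
          ∀ x : EuclideanSpace ℝ (Fin n),
            Tw w f x ≤
              ENNReal.ofReal (C * ((∫ z, f z ^ p * w z) ^ (1 / p)) ^ (p / d)) *
                Mcw w f x ^ (1 - p / d) :=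
  stmt13_general n d p hp hpd w D hw c hc hAhlfors
end
end

section
/- Let d > 1 and 1 < p < d. Let w be a doubling weight on ℝⁿ with doubling constant D, satisfying w(B(x,r)) ≥ c r^d for all x ∈ ℝⁿ and r > 0 with c > 0. Then there is a constant C depending on D, c, p, d such that for every nonnegative f ∈ L^p(w), every x ∈ ℝⁿ, and every R > 0, ∫_{|y−x|≥R} (|x−y| / w(B(x,|x−y|))) f(y) w(y) dy ≤ C · R^{1−d/p} · ‖f‖_{L^p(w)}. -/
/-!
Put `ν = w dx` and `s = 1 - d/p < 0`, and cut `{|y - x| ≥ R}` into the dyadic annuli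
`r ≤ |y - x| < 2r`, `r = 2ᵏR`. On such an annulus the kernel is at most `2r / ν(B(x,r))`, and
Hölder's inequality against the constant `1` gives
`∫ f dν ≤ ‖f‖_{L^p(ν)} ν(B(x,2r))^{1-1/p} ≤ ‖f‖_{L^p(ν)} (D ν(B(x,r)))^{1-1/p}`.
So the annulus contributes at most
`2 D^{1-1/p} r ν(B(x,r))^{-1/p} ‖f‖ ≤ 2 D^{1-1/p} c^{-1/p} rˢ ‖f‖`,
and since `s < 0` these bounds form a geometric series in `k` summing to a multiple of `Rˢ`.
Only doubling and the lower mass bound at the centre `x` enter, so the estimate holds in any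
metric measure space.
-/

open MeasureTheory Metric ENNReal

noncomputable section

open Set

section Lintegral

variable {α : Type*} [MeasurableSpace α] {μ : Measure α}

theorem lintegral_le_lintegral_rpow_mul_measure_univ {f : α → ℝ≥0∞}
    (hf : AEMeasurable f μ) {p : ℝ} (hp : 1 ≤ p) :
    ∫⁻ a, f a ∂μ ≤ (∫⁻ a, f a ^ p ∂μ) ^ (1 / p) * μ univ ^ (1 - 1 / p) := by
  have hp0 : p ≠ 0 := by positivity
  have h := ENNReal.lintegral_mul_norm_pow_le (hf.pow_const p) (aemeasurable_const (b := 1))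
    (by positivity : (0 : ℝ) ≤ 1 / p) (sub_nonneg.2 ((div_le_one (by positivity)).2 hp))
    (add_sub_cancel _ _)
  simpa [← ENNReal.rpow_mul, hp0] using h

theorem lintegral_ofReal_mul_eq_lintegral_withDensity {g w : α → ℝ} (hg : 0 ≤ g)
    (hw : AEMeasurable w μ) :
    ∫⁻ a, ENNReal.ofReal (g a * w a) ∂μ =
      ∫⁻ a, ENNReal.ofReal (g a) ∂μ.withDensity fun a => ENNReal.ofReal (w a) := by
  rw [lintegral_withDensity_eq_lintegral_mul_non_measurable₀ _ hw.ennreal_ofReal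
    (ae_of_all _ fun _ => ENNReal.ofReal_lt_top)]
  simp_rw [Pi.mul_apply, ENNReal.ofReal_mul (hg _), mul_comm]

end Lintegral

theorem div_mul_rpow_one_sub_le {c d D p r V : ℝ} (hp : 0 < p) (hc : 0 < c) (hr : 0 < r)
    (hD : 0 ≤ D) (hV : c * r ^ d ≤ V) :
    r / V * (D * V) ^ (1 - 1 / p) ≤ D ^ (1 - 1 / p) * c ^ (-(1 / p)) * r ^ (1 - d / p) := by
  have hV0 : 0 < V := lt_of_lt_of_le (by positivity) hV
  calc r / V * (D * V) ^ (1 - 1 / p) = D ^ (1 - 1 / p) * (r * V ^ (-(1 / p))) := by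
        rw [Real.mul_rpow hD hV0.le, Real.rpow_sub hV0, Real.rpow_one, Real.rpow_neg hV0.le]
        field_simp
    _ ≤ D ^ (1 - 1 / p) * (r * (c * r ^ d) ^ (-(1 / p))) := by
        gcongr D ^ (1 - 1 / p) * (r * ?_)
        exact Real.rpow_le_rpow_of_nonpos (by positivity) hV (neg_nonpos.2 (by positivity))
    _ = D ^ (1 - 1 / p) * c ^ (-(1 / p)) * r ^ (1 - d / p) := by
        rw [Real.mul_rpow hc.le (by positivity), ← Real.rpow_mul hr.le,
          show 1 - d / p = 1 + d * -(1 / p) by ring, Real.rpow_add hr, Real.rpow_one]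
        ring

theorem one_sub_div_neg {d p : ℝ} (hp : 0 < p) (hpd : p < d) : 1 - d / p < 0 :=
  sub_neg.2 ((one_lt_div hp).2 hpd)

theorem hasSum_two_pow_mul_rpow {s : ℝ} (hs : s < 0) {R : ℝ} (hR : 0 ≤ R) :
    HasSum (fun k : ℕ => ((2 : ℝ) ^ k * R) ^ s) (R ^ s / (1 - 2 ^ s)) := by
  have hterm : ∀ k : ℕ, ((2 : ℝ) ^ k * R) ^ s = R ^ s * ((2 : ℝ) ^ s) ^ k := fun k => by
    rw [Real.mul_rpow (by positivity) hR, ← Real.rpow_natCast, ← Real.rpow_natCast,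
      ← Real.rpow_mul zero_le_two, ← Real.rpow_mul zero_le_two, mul_comm, mul_comm (k : ℝ)]
  simp_rw [hterm, div_eq_mul_inv]
  exact (hasSum_geometric_of_lt_one (by positivity)
    (Real.rpow_lt_one_of_one_lt_of_neg one_lt_two hs)).mul_left _

section MetricMeasure

variable {X : Type*} [PseudoMetricSpace X] {x : X}

theorem compl_ball_subset_iUnion_annulus {R : ℝ} (hR : 0 < R) :
    (ball x R)ᶜ ⊆ ⋃ k : ℕ, ball x (2 * (2 ^ k * R)) \ ball x (2 ^ k * R) := by
  intro y hy
  rw [mem_compl_iff, mem_ball', not_lt] at hy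
  obtain ⟨k, hk, hk'⟩ := exists_nat_pow_near ((one_le_div hR).2 hy) one_lt_two
  refine mem_iUnion.2 ⟨k, ?_, ?_⟩
  · rw [mem_ball', ← mul_assoc, ← pow_succ']
    exact (div_lt_iff₀ hR).1 hk'
  · rw [mem_ball', not_lt]
    exact (le_div_iff₀ hR).1 hk

variable [MeasurableSpace X] [OpensMeasurableSpace X] {μ : Measure X}

theorem setLIntegral_annulus_le {f : X → ℝ≥0∞} (hf : AEMeasurable f μ) {c d D p r : ℝ}
    (hp : 1 ≤ p) (hc : 0 < c) (hD : 0 ≤ D) (hr : 0 < r) (hfin : μ (ball x (2 * r)) ≠ ∞)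
    (hdbl : μ (ball x (2 * r)) ≤ ENNReal.ofReal D * μ (ball x r))
    (hlow : ENNReal.ofReal (c * r ^ d) ≤ μ (ball x r)) :
    ∫⁻ y in ball x (2 * r) \ ball x r,
        ENNReal.ofReal (dist x y / (μ (ball x (dist x y))).toReal) * f y ∂μ ≤
      ENNReal.ofReal (2 * D ^ (1 - 1 / p) * c ^ (-(1 / p)) * r ^ (1 - d / p)) *
        (∫⁻ y, f y ^ p ∂μ) ^ (1 / p) := by
  set V := (μ (ball x r)).toReal
  have hfin_r : μ (ball x r) ≠ ∞ :=
    ne_top_of_le_ne_top hfin (measure_mono (ball_subset_ball (by linarith)))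
  have hV : c * r ^ d ≤ V := (ENNReal.ofReal_le_iff_le_toReal hfin_r).1 hlow
  have hV0 : 0 < V := lt_of_lt_of_le (by positivity) hV
  have hkernel : ∀ y ∈ ball x (2 * r) \ ball x r,
      dist x y / (μ (ball x (dist x y))).toReal ≤ 2 * r / V := by
    rintro y ⟨hy, hy'⟩
    rw [mem_ball'] at hy
    rw [mem_ball', not_lt] at hy'
    refine div_le_div₀ (by positivity) hy.le hV0 (ENNReal.toReal_mono ?_ (measure_mono ?_))
    · exact ne_top_of_le_ne_top hfin (measure_mono (ball_subset_ball hy.le))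
    · exact ball_subset_ball hy'
  have hp0 : 0 < p := by positivity
  have hq0 : 0 ≤ 1 - 1 / p := sub_nonneg.2 ((div_le_one hp0).2 hp)
  calc ∫⁻ y in ball x (2 * r) \ ball x r,
        ENNReal.ofReal (dist x y / (μ (ball x (dist x y))).toReal) * f y ∂μ
      ≤ ∫⁻ y in ball x (2 * r) \ ball x r, ENNReal.ofReal (2 * r / V) * f y ∂μ :=
        setLIntegral_mono' (measurableSet_ball.diff measurableSet_ball) fun y hy =>
          mul_le_mul_left (ENNReal.ofReal_le_ofReal (hkernel y hy)) _
    _ = ENNReal.ofReal (2 * r / V) * ∫⁻ y in ball x (2 * r) \ ball x r, f y ∂μ :=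
        lintegral_const_mul' _ _ ENNReal.ofReal_ne_top
    _ ≤ ENNReal.ofReal (2 * r / V) *
          ((∫⁻ y, f y ^ p ∂μ) ^ (1 / p) * μ (ball x (2 * r)) ^ (1 - 1 / p)) := by
        gcongr
        refine (lintegral_le_lintegral_rpow_mul_measure_univ hf.restrict hp).trans ?_
        rw [Measure.restrict_apply_univ]
        exact mul_le_mul' (ENNReal.rpow_le_rpow (setLIntegral_le_lintegral _ _) (by positivity))
          (ENNReal.rpow_le_rpow (measure_mono sdiff_subset) hq0)
    _ ≤ ENNReal.ofReal (2 * r / V) *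
          ((∫⁻ y, f y ^ p ∂μ) ^ (1 / p) * ENNReal.ofReal (D * V) ^ (1 - 1 / p)) := by
        rw [ENNReal.ofReal_mul hD, ENNReal.ofReal_toReal hfin_r]
        gcongr
    _ = ENNReal.ofReal (2 * (r / V * (D * V) ^ (1 - 1 / p))) *
          (∫⁻ y, f y ^ p ∂μ) ^ (1 / p) := by
        rw [ENNReal.ofReal_rpow_of_nonneg (by positivity) hq0, mul_comm (_ ^ (1 / p)),
          ← mul_assoc, ← ENNReal.ofReal_mul (by positivity)]
        congr 2
        ring
    _ ≤ ENNReal.ofReal (2 * D ^ (1 - 1 / p) * c ^ (-(1 / p)) * r ^ (1 - d / p)) *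
          (∫⁻ y, f y ^ p ∂μ) ^ (1 / p) := by
        gcongr ENNReal.ofReal ?_ * _
        linarith [div_mul_rpow_one_sub_le hp0 hc hr hD hV]

theorem setLIntegral_compl_ball_le {f : X → ℝ≥0∞} (hf : AEMeasurable f μ) {c d D p R : ℝ}
    (hp : 1 ≤ p) (hpd : p < d) (hc : 0 < c) (hD : 0 ≤ D) (hR : 0 < R)
    (hfin : ∀ r, μ (ball x r) ≠ ∞)
    (hdbl : ∀ r, 0 < r → μ (ball x (2 * r)) ≤ ENNReal.ofReal D * μ (ball x r))
    (hlow : ∀ r, 0 < r → ENNReal.ofReal (c * r ^ d) ≤ μ (ball x r)) :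
    ∫⁻ y in (ball x R)ᶜ,
        ENNReal.ofReal (dist x y / (μ (ball x (dist x y))).toReal) * f y ∂μ ≤
      ENNReal.ofReal (2 * D ^ (1 - 1 / p) * c ^ (-(1 / p)) / (1 - 2 ^ (1 - d / p)) *
        R ^ (1 - d / p)) * (∫⁻ y, f y ^ p ∂μ) ^ (1 / p) := by
  set K := 2 * D ^ (1 - 1 / p) * c ^ (-(1 / p))
  have hsum := (hasSum_two_pow_mul_rpow (one_sub_div_neg (by positivity) hpd) hR.le).mul_left K
  calc _
      ≤ ∑' k : ℕ, ∫⁻ y in ball x (2 * (2 ^ k * R)) \ ball x (2 ^ k * R),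
          ENNReal.ofReal (dist x y / (μ (ball x (dist x y))).toReal) * f y ∂μ :=
        (lintegral_mono_set (compl_ball_subset_iUnion_annulus hR)).trans
          (lintegral_iUnion_le _ _)
    _ ≤ ∑' k : ℕ, ENNReal.ofReal (K * ((2 : ℝ) ^ k * R) ^ (1 - d / p)) *
          (∫⁻ y, f y ^ p ∂μ) ^ (1 / p) :=
        ENNReal.tsum_le_tsum fun k => by
          have hr : (0 : ℝ) < 2 ^ k * R := by positivity
          exact setLIntegral_annulus_le hf hp hc hD hr (hfin _) (hdbl _ hr) (hlow _ hr)
    _ = ENNReal.ofReal (K / (1 - 2 ^ (1 - d / p)) * R ^ (1 - d / p)) *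
          (∫⁻ y, f y ^ p ∂μ) ^ (1 / p) := by
        rw [ENNReal.tsum_mul_right, ← ENNReal.ofReal_tsum_of_nonneg (fun k => by positivity)
          hsum.summable, hsum.tsum_eq]
        congr 2
        ring

end MetricMeasure

section Weight

variable {n : ℕ} {w : EuclideanSpace ℝ (Fin n) → ℝ}

def weightMeasure (w : EuclideanSpace ℝ (Fin n) → ℝ) : Measure (EuclideanSpace ℝ (Fin n)) :=
  volume.withDensity fun y => ENNReal.ofReal (w y)

theorem weightMass_nonneg (hw0 : ∀ x, 0 ≤ w x) (x : EuclideanSpace ℝ (Fin n)) (r : ℝ) :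
    0 ≤ weightMass w x r :=
  setIntegral_nonneg measurableSet_ball fun y _ => hw0 y

theorem weightMeasure_ball (hw0 : ∀ x, 0 ≤ w x) (hw : LocallyIntegrable w volume)
    (x : EuclideanSpace ℝ (Fin n)) (r : ℝ) :
    weightMeasure w (ball x r) = ENNReal.ofReal (weightMass w x r) := by
  rw [weightMeasure, withDensity_apply _ measurableSet_ball, weightMass,
    ofReal_integral_eq_lintegral_ofReal
      ((hw.integrableOn_isCompact (isCompact_closedBall x r)).mono_set ball_subset_closedBall)
      (ae_of_all _ hw0)]

theorem IsDoubling.weightMeasure_ball_two_mul_le {D : ℝ} (hdw : IsDoubling w D)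
    (x : EuclideanSpace ℝ (Fin n)) {r : ℝ} (hr : 0 < r) :
    weightMeasure w (ball x (2 * r)) ≤ ENNReal.ofReal (max D 1) * weightMeasure w (ball x r) := by
  obtain ⟨hw0, hw, hdbl⟩ := hdw
  rw [weightMeasure_ball hw0 hw, weightMeasure_ball hw0 hw,
    ← ENNReal.ofReal_mul (zero_le_one.trans (le_max_right D 1))]
  exact ENNReal.ofReal_le_ofReal ((hdbl x r hr).trans
    (mul_le_mul_of_nonneg_right (le_max_left D 1) (weightMass_nonneg hw0 x r)))

theorem setLIntegral_compl_ball_eq_weightMeasure (hw0 : ∀ x, 0 ≤ w x)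
    (hw : LocallyIntegrable w volume) {f : EuclideanSpace ℝ (Fin n) → ℝ}
    (hf0 : ∀ x, 0 ≤ f x) (x : EuclideanSpace ℝ (Fin n)) (R : ℝ) :
    ∫⁻ y in (ball x R)ᶜ, ENNReal.ofReal (dist x y / weightMass w x (dist x y) * f y * w y) =
      ∫⁻ y in (ball x R)ᶜ,
        ENNReal.ofReal (dist x y / (weightMeasure w (ball x (dist x y))).toReal) *
          ENNReal.ofReal (f y) ∂weightMeasure w := by
  have hkernel : ∀ y, 0 ≤ dist x y / weightMass w x (dist x y) := fun y =>
    div_nonneg dist_nonneg (weightMass_nonneg hw0 _ _)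
  calc ∫⁻ y in (ball x R)ᶜ, ENNReal.ofReal (dist x y / weightMass w x (dist x y) * f y * w y)
      = ∫⁻ y in (ball x R)ᶜ, ENNReal.ofReal (dist x y / weightMass w x (dist x y) * f y)
          ∂weightMeasure w := by
        rw [weightMeasure, restrict_withDensity measurableSet_ball.compl]
        exact lintegral_ofReal_mul_eq_lintegral_withDensity
          (fun y => mul_nonneg (hkernel y) (hf0 y)) hw.aestronglyMeasurable.aemeasurable.restrict
    _ = _ := lintegral_congr fun y => by
        rw [weightMeasure_ball hw0 hw, ENNReal.toReal_ofReal (weightMass_nonneg hw0 _ _),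
          ENNReal.ofReal_mul (hkernel y)]

theorem lintegral_rpow_weightMeasure (hw0 : ∀ x, 0 ≤ w x) (hw : AEMeasurable w volume)
    {f : EuclideanSpace ℝ (Fin n) → ℝ} (hf0 : ∀ x, 0 ≤ f x) {p : ℝ} (hp : 0 ≤ p)
    (hfp : Integrable (fun x => f x ^ p * w x)) :
    ∫⁻ y, ENNReal.ofReal (f y) ^ p ∂weightMeasure w =
      ENNReal.ofReal (∫ z, f z ^ p * w z) := by
  rw [ofReal_integral_eq_lintegral_ofReal hfp
    (ae_of_all _ fun z => mul_nonneg (Real.rpow_nonneg (hf0 z) p) (hw0 z)),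
    lintegral_ofReal_mul_eq_lintegral_withDensity (fun z => Real.rpow_nonneg (hf0 z) p) hw]
  exact lintegral_congr fun z => ENNReal.ofReal_rpow_of_nonneg (hf0 z) hp

end Weight

theorem stmt15_general (n : ℕ) (d p : ℝ) (hp : 1 < p) (hpd : p < d)
    (D c : ℝ) (hc : 0 < c) :
    ∃ C : ℝ, 0 < C ∧
      ∀ w : EuclideanSpace ℝ (Fin n) → ℝ, IsDoubling w D →
        (∀ (x : EuclideanSpace ℝ (Fin n)) (r : ℝ), 0 < r →
          c * r ^ d ≤ ∫ y in ball x r, w y) →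
        ∀ f : EuclideanSpace ℝ (Fin n) → ℝ, (∀ x, 0 ≤ f x) → Measurable f →
          Integrable (fun x => f x ^ p * w x) →
            ∀ (x : EuclideanSpace ℝ (Fin n)) (R : ℝ), 0 < R →
              (∫⁻ y in (ball x R)ᶜ,
                  ENNReal.ofReal ((dist x y / weightMass w x (dist x y)) * f y * w y)) ≤
                ENNReal.ofReal
                  (C * R ^ (1 - d / p) * (∫ z, f z ^ p * w z) ^ (1 / p)) := by
  have hp0 : 0 < p := by linarith
  have h2s := Real.rpow_lt_one_of_one_lt_of_neg one_lt_two (one_sub_div_neg hp0 hpd)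
  -- `max D 1` keeps `C` positive, and `rpow` meaningful, before any weight is in sight.
  refine ⟨2 * max D 1 ^ (1 - 1 / p) * c ^ (-(1 / p)) / (1 - 2 ^ (1 - d / p)),
    div_pos (by positivity) (sub_pos.2 h2s), ?_⟩
  rintro w hdw hlow f hf0 hf hfp x R hR
  have hw0 := hdw.1
  have hw := hdw.2.1
  have hI : 0 ≤ ∫ z, f z ^ p * w z :=
    integral_nonneg fun z => mul_nonneg (Real.rpow_nonneg (hf0 z) p) (hw0 z)
  rw [setLIntegral_compl_ball_eq_weightMeasure hw0 hw hf0, ENNReal.ofReal_mul (by positivity),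
    ← ENNReal.ofReal_rpow_of_nonneg hI (by positivity),
    ← lintegral_rpow_weightMeasure hw0 hw.aestronglyMeasurable.aemeasurable hf0 hp0.le hfp]
  refine setLIntegral_compl_ball_le hf.ennreal_ofReal.aemeasurable hp.le hpd hc
    (zero_le_one.trans (le_max_right D 1)) hR (fun r => ?_) (fun r hr => ?_) (fun r hr => ?_)
  · rw [weightMeasure_ball hw0 hw]
    exact ENNReal.ofReal_ne_top
  · exact hdw.weightMeasure_ball_two_mul_le x hr
  · rw [weightMeasure_ball hw0 hw]
    exact ENNReal.ofReal_le_ofReal (hlow x r hr)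

/-- Let `d > 1`, `1 < p < d`. There is `C = C(D,c,p,d)` such that if `w` is
doubling with constant `D` and satisfies `w(B(x,r)) ≥ c rᵈ` with `c > 0`, then for every
nonnegative `f ∈ L^p(w)`, every `x` and every `R > 0`,
`∫_{|y−x|≥R} (|x−y|/w(B(x,|x−y|))) f(y) w(y) dy ≤ C R^{1−d/p} ‖f‖_{L^p(w)}`. -/
theorem stmt15 (n : ℕ) (d p : ℝ) (hd : 1 < d) (hp : 1 < p) (hpd : p < d)
    (D c : ℝ) (hc : 0 < c) :
    ∃ C : ℝ, 0 < C ∧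
      ∀ w : EuclideanSpace ℝ (Fin n) → ℝ, IsDoubling w D →
        (∀ (x : EuclideanSpace ℝ (Fin n)) (r : ℝ), 0 < r →
          c * r ^ d ≤ ∫ y in ball x r, w y) →
        ∀ f : EuclideanSpace ℝ (Fin n) → ℝ, (∀ x, 0 ≤ f x) → Measurable f →
          Integrable (fun x => f x ^ p * w x) →
            ∀ (x : EuclideanSpace ℝ (Fin n)) (R : ℝ), 0 < R →
              (∫⁻ y in (ball x R)ᶜ,
                  ENNReal.ofReal ((dist x y / weightMass w x (dist x y)) * f y * w y)) ≤
                ENNReal.ofReal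
                  (C * R ^ (1 - d / p) * (∫ z, f z ^ p * w z) ^ (1 / p)) :=
  stmt15_general n d p hp hpd D c hc
end
end
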